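/- Suppose the weights {w_{p,i}} (all of multiplicity one) satisfy the genericity condition: for all integers n_{p,i} with |n_{p,i}| ≤ N (where N > ∑ n_i), if ∑ n_{p,i} w_{p,i} ∈ Z then all n_{p,i} = 0. Then for any two parabolic bundles G' = ⊕E'_i and G = ⊕E_i arising from a proper subchain E'_• of a chain E_• of rank vector (n_i), one has parμ(⊕E'_i) ≠ parμ(⊕E_i); consequently there are no α-independent strictly semistable parabolic chains of rank (n_0,...,n_r). -/

import Mathlib

/-!
Here `S` is the set of weights of `⊕ E_i` and `S' ⊊ S` that of `⊕ E'_i`; as every weight has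
multiplicity one, `#S` and `#S'` are the total ranks.

Clearing denominators, `parμ(⊕E'_i) = parμ(⊕E_i)` says that the weight combination
`#S • ∑_{S'} w - #S' • ∑_S w` equals the integer `#S' d - #S d'`. Its coefficients are bounded
by `#S < N`, and on a weight of `S \ S'` the coefficient is `-#S' ≠ 0`, contradicting genericity.
-/

open Finset

def slopeDiffCoeff {ι : Type*} [DecidableEq ι] (S' S : Finset ι) (i : ι) : ℤ :=
  (if i ∈ S' then (#S : ℤ) else 0) - (if i ∈ S then (#S' : ℤ) else 0)

section slopeDiffCoeff

variable {ι : Type*} [DecidableEq ι] {S' S : Finset ι}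

theorem abs_slopeDiffCoeff_le (hsub : S' ⊆ S) (i : ι) : |slopeDiffCoeff S' S i| ≤ #S := by
  have hcard : #S' ≤ #S := card_le_card hsub
  unfold slopeDiffCoeff
  by_cases hi' : i ∈ S'
  · simp only [hi', hsub hi', if_true, abs_le]
    omega
  · by_cases hi : i ∈ S <;> simp only [hi, hi', if_true, if_false, abs_le] <;> omega

theorem slopeDiffCoeff_of_mem_sdiff {i : ι} (hi : i ∈ S) (hi' : i ∉ S') :
    slopeDiffCoeff S' S i = -#S' := by
  simp [slopeDiffCoeff, hi, hi']

theorem sum_slopeDiffCoeff_mul [Fintype ι] {R : Type*} [CommRing R] (w : ι → R) :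
    ∑ i, (slopeDiffCoeff S' S i : R) * w i = #S * ∑ i ∈ S', w i - #S' * ∑ i ∈ S, w i := by
  simp only [slopeDiffCoeff, Int.cast_sub, Int.cast_ite, Int.cast_natCast, Int.cast_zero,
    sub_mul, ite_mul, zero_mul, sum_sub_distrib, sum_ite_mem, univ_inter, mul_sum]

end slopeDiffCoeff

theorem no_alpha_independent_semistable_general
    (ι : Type*) [Fintype ι]
    (w : ι → ℝ) (N : ℕ)
    (S' S : Finset ι)
    (hsub : S' ⊂ S)            -- E'_• is a proper subchain of E_•
    (hne : S'.Nonempty)        -- E'_• is nonzero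
    (hN : S.card < N)          -- N is larger than the total rank ∑ n_i
    -- genericity of the weights:
    (hgen : ∀ nc : ι → ℤ, (∀ i, |nc i| ≤ (N : ℤ)) →
      (∃ z : ℤ, ∑ i, (nc i : ℝ) * w i = (z : ℝ)) → ∀ i, nc i = 0)
    (d' d : ℤ) :               -- total degrees of ⊕E'_i and ⊕E_i
    ((d' : ℝ) + ∑ i ∈ S', w i) / (S'.card : ℝ) ≠
      ((d : ℝ) + ∑ i ∈ S, w i) / (S.card : ℝ) := by
  classical
  intro hslope
  have hS' : (#S' : ℝ) ≠ 0 := by positivity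
  have hS : (#S : ℝ) ≠ 0 := by positivity [hne.mono hsub.subset]
  have hcross := (div_eq_div_iff hS' hS).mp hslope
  have hint : ∑ i, (slopeDiffCoeff S' S i : ℝ) * w i = ((#S' * d - #S * d' : ℤ) : ℝ) := by
    rw [sum_slopeDiffCoeff_mul]
    push_cast
    linear_combination hcross
  have hbound (i : ι) : |slopeDiffCoeff S' S i| ≤ N :=
    (abs_slopeDiffCoeff_le hsub.subset i).trans (by exact_mod_cast hN.le)
  obtain ⟨i, hi, hi'⟩ := exists_of_ssubset hsub
  have hzero := hgen _ hbound ⟨_, hint⟩ i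
  rw [slopeDiffCoeff_of_mem_sdiff hi hi', neg_eq_zero, Nat.cast_eq_zero] at hzero
  exact hne.card_pos.ne' hzero

theorem no_alpha_independent_semistable
    (ι : Type*) [Fintype ι] [DecidableEq ι]
    (w : ι → ℝ) (N : ℕ)
    (S' S : Finset ι)
    (hsub : S' ⊂ S)            -- E'_• is a proper subchain of E_•
    (hne : S'.Nonempty)        -- E'_• is nonzero
    (hN : S.card < N)          -- N is larger than the total rank ∑ n_i
    -- genericity of the weights:
    (hgen : ∀ nc : ι → ℤ, (∀ i, |nc i| ≤ (N : ℤ)) →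
      (∃ z : ℤ, ∑ i, (nc i : ℝ) * w i = (z : ℝ)) → ∀ i, nc i = 0)
    (d' d : ℤ) :               -- total degrees of ⊕E'_i and ⊕E_i
    ((d' : ℝ) + ∑ i ∈ S', w i) / (S'.card : ℝ) ≠
      ((d : ℝ) + ∑ i ∈ S, w i) / (S.card : ℝ) :=
  no_alpha_independent_semistable_general ι w N S' S hsub hne hN hgen d' d
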